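/- Let F be a convex class of probability distributions and T : F → ℝ a non-constant max-functional. Then there is no k ∈ ℕ, no mixture-continuous elicitable functional T' : F → ℝ^k with elicitable components whose image T'(F) is a non-empty open subset of ℝ^k, and no function f : T'(F) → ℝ with T = f ∘ T'. -/
import Mathlib


open MeasureTheory

/-- The mixture `l • μ + (1-l) • ν` of two measures. -/
noncomputable def mix {O : Type*} [MeasurableSpace O] (μ ν : Measure O) (l : ℝ) : Measure O :=
  ENNReal.ofReal l • μ + ENNReal.ofReal (1 - l) • ν

/-- `S` is a strictly `𝓕`-consistent scoring function for the functional `T`. -/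
def StrictlyConsistent {O A : Type*} [MeasurableSpace O]
    (𝓕 : Set (Measure O)) (T : Measure O → A) (S : A → O → ℝ) : Prop :=
  (∀ x, ∀ F ∈ 𝓕, Integrable (S x) F) ∧
  (∀ x, ∀ F ∈ 𝓕, ∫ y, S (T F) y ∂F ≤ ∫ y, S x y ∂F) ∧
  (∀ x, ∀ F ∈ 𝓕, ∫ y, S x y ∂F = ∫ y, S (T F) y ∂F → x = T F)


/-- `T` is a max-functional on the class `𝓕`. -/
def MaxFunctional {O : Type*} [MeasurableSpace O]
    (𝓕 : Set (Measure O)) (T : Measure O → ℝ) : Prop :=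
  ∀ F₀ ∈ 𝓕, ∀ F₁ ∈ 𝓕, ∀ l ∈ Set.Ioo (0:ℝ) 1, T (mix F₁ F₀ l) = max (T F₀) (T F₁)

lemma mix_zero {O : Type*} [MeasurableSpace O] (μ ν : Measure O) : mix μ ν 0 = ν := by
  simp [mix]

lemma mix_one {O : Type*} [MeasurableSpace O] (μ ν : Measure O) : mix μ ν 1 = μ := by
  simp [mix]

lemma integrable_mix {O : Type*} [MeasurableSpace O] {μ ν : Measure O} {g : O → ℝ}
    (hμ : Integrable g μ) (hν : Integrable g ν) (l : ℝ) : Integrable g (mix μ ν l) :=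
  Integrable.add_measure (hμ.smul_measure ENNReal.ofReal_ne_top)
    (hν.smul_measure ENNReal.ofReal_ne_top)

lemma integral_mix {O : Type*} [MeasurableSpace O] {μ ν : Measure O} {g : O → ℝ}
    (hμ : Integrable g μ) (hν : Integrable g ν) {l : ℝ} (h0 : 0 ≤ l) (h1 : l ≤ 1) :
    ∫ y, g y ∂(mix μ ν l) = l * ∫ y, g y ∂μ + (1 - l) * ∫ y, g y ∂ν := by
  unfold mix
  rw [integral_add_measure (hμ.smul_measure ENNReal.ofReal_ne_top)
      (hν.smul_measure ENNReal.ofReal_ne_top), integral_smul_measure, integral_smul_measure,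
    ENNReal.toReal_ofReal h0, ENNReal.toReal_ofReal (by linarith : (0:ℝ) ≤ 1 - l)]
  simp [smul_eq_mul]

lemma cxls_component {O : Type*} [MeasurableSpace O] {𝓕 : Set (Measure O)}
    (hconv : ∀ F ∈ 𝓕, ∀ G ∈ 𝓕, ∀ l ∈ Set.Icc (0:ℝ) 1, mix F G l ∈ 𝓕)
    {Tc : Measure O → ℝ} {S : ℝ → O → ℝ} (hS : StrictlyConsistent 𝓕 Tc S)
    {F G : Measure O} (hF : F ∈ 𝓕) (hG : G ∈ 𝓕) (hT : Tc F = Tc G)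
    {l : ℝ} (h0 : 0 ≤ l) (h1 : l ≤ 1) : Tc (mix F G l) = Tc F := by
  rcases eq_or_lt_of_le h0 with h|h0'
  · rw [← h, mix_zero]; exact hT.symm
  rcases eq_or_lt_of_le h1 with h|h1'
  · rw [h, mix_one]
  obtain ⟨hInt, hcons, hstrict⟩ := hS
  have hM : mix F G l ∈ 𝓕 := hconv F hF G hG l ⟨h0, h1⟩
  set M := mix F G l with hMdef
  set m := Tc M with hm
  have e1 : ∫ y, S (Tc F) y ∂M = l * ∫ y, S (Tc F) y ∂F + (1 - l) * ∫ y, S (Tc F) y ∂G :=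
    integral_mix (hInt _ F hF) (hInt _ G hG) h0 h1
  have e2 : ∫ y, S m y ∂M = l * ∫ y, S m y ∂F + (1 - l) * ∫ y, S m y ∂G :=
    integral_mix (hInt _ F hF) (hInt _ G hG) h0 h1
  have i1 : ∫ y, S (Tc F) y ∂F ≤ ∫ y, S m y ∂F := hcons m F hF
  have i2 : ∫ y, S (Tc F) y ∂G ≤ ∫ y, S m y ∂G := by
    rw [hT]; exact hcons m G hG
  have i3 : ∫ y, S m y ∂M ≤ ∫ y, S (Tc F) y ∂M := hcons (Tc F) M hM
  have heq : ∫ y, S (Tc F) y ∂M = ∫ y, S m y ∂M := by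
    refine le_antisymm ?_ i3
    rw [e1, e2]
    have := mul_le_mul_of_nonneg_left i1 (le_of_lt h0')
    have := mul_le_mul_of_nonneg_left i2 (by linarith : (0:ℝ) ≤ 1 - l)
    linarith
  exact (hstrict (Tc F) M hM heq).symm

lemma path_hits {O : Type*} [MeasurableSpace O] {𝓕 : Set (Measure O)}
    (hconv : ∀ F ∈ 𝓕, ∀ G ∈ 𝓕, ∀ l ∈ Set.Icc (0:ℝ) 1, mix F G l ∈ 𝓕)
    {T : Measure O → ℝ} {k : ℕ} {T' : Measure O → Fin k → ℝ}
    (hmax : MaxFunctional 𝓕 T)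
    (hmc : ∀ F ∈ 𝓕, ∀ G ∈ 𝓕, ContinuousOn (fun l : ℝ => T' (mix F G l)) (Set.Icc 0 1))
    (hcomp : ∀ i : Fin k, ∃ S : ℝ → O → ℝ, StrictlyConsistent 𝓕 (fun F => T' F i) S)
    {F G : Measure O} (hF : F ∈ 𝓕) (hG : G ∈ 𝓕)
    (x : Fin k → ℝ) (i : Fin k)
    (hagree : ∀ j, j ≠ i → T' G j = T' F j ∧ x j = T' F j)
    (hx : x i ∈ Set.Ioo (min (T' F i) (T' G i)) (max (T' F i) (T' G i))) :
    ∃ H ∈ 𝓕, T' H = x ∧ T H = max (T F) (T G) := by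
  set φ : ℝ → ℝ := fun l => T' (mix G F l) i with hφ
  have hφc : ContinuousOn φ (Set.Icc 0 1) :=
    (continuous_apply i).comp_continuousOn (hmc G hG F hF)
  have hφ0 : φ 0 = T' F i := by simp [hφ, mix_zero]
  have hφ1 : φ 1 = T' G i := by simp [hφ, mix_one]
  have hex : ∃ l ∈ Set.Ioo (0:ℝ) 1, φ l = x i := by
    rcases lt_trichotomy (T' F i) (T' G i) with hlt|heq|hgt
    · have : x i ∈ Set.Ioo (φ 0) (φ 1) := by
        rw [hφ0, hφ1]
        rw [min_eq_left hlt.le, max_eq_right hlt.le] at hx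
        exact hx
      obtain ⟨l, hl, hlx⟩ := intermediate_value_Ioo (by norm_num : (0:ℝ) ≤ 1) hφc this
      exact ⟨l, hl, hlx⟩
    · rw [heq] at hx; simp at hx
    · have : x i ∈ Set.Ioo (φ 1) (φ 0) := by
        rw [hφ0, hφ1]
        rw [min_eq_right hgt.le, max_eq_left hgt.le] at hx
        exact hx
      obtain ⟨l, hl, hlx⟩ := intermediate_value_Ioo' (by norm_num : (0:ℝ) ≤ 1) hφc this
      exact ⟨l, hl, hlx⟩
  obtain ⟨l, hl, hlx⟩ := hex
  refine ⟨mix G F l, hconv G hG F hF l ⟨hl.1.le, hl.2.le⟩, ?_, hmax F hF G hG l hl⟩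
  funext j
  by_cases hj : j = i
  · rw [hj]; exact hlx
  · obtain ⟨S, hS⟩ := hcomp j
    have := cxls_component hconv hS hG hF (hagree j hj).1 hl.1.le hl.2.le
    rw [this, (hagree j hj).1, (hagree j hj).2]

lemma f_ge {O : Type*} [MeasurableSpace O] {𝓕 : Set (Measure O)}
    (hconv : ∀ F ∈ 𝓕, ∀ G ∈ 𝓕, ∀ l ∈ Set.Icc (0:ℝ) 1, mix F G l ∈ 𝓕)
    {T : Measure O → ℝ} {k : ℕ} {T' : Measure O → Fin k → ℝ}
    (hmax : MaxFunctional 𝓕 T)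
    (hmc : ∀ F ∈ 𝓕, ∀ G ∈ 𝓕, ContinuousOn (fun l : ℝ => T' (mix F G l)) (Set.Icc 0 1))
    (hcomp : ∀ i : Fin k, ∃ S : ℝ → O → ℝ, StrictlyConsistent 𝓕 (fun F => T' F i) S)
    {f : (Fin k → ℝ) → ℝ} (hf : ∀ F ∈ 𝓕, T F = f (T' F))
    {F F' : Measure O} (hF : F ∈ 𝓕) (hF' : F' ∈ 𝓕)
    (v : Fin k → ℝ) (i : Fin k)
    (hagree : ∀ j, j ≠ i → T' F' j = T' F j ∧ v j = T' F j)
    (hrefl : T' F' i = 2 * v i - T' F i) (hne : v i ≠ T' F i) :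
    f (T' F) ≤ f v := by
  have hx : v i ∈ Set.Ioo (min (T' F i) (T' F' i)) (max (T' F i) (T' F' i)) := by
    rcases lt_or_gt_of_ne hne with h|h
    · constructor
      · exact lt_of_le_of_lt (min_le_right _ _) (by rw [hrefl]; linarith)
      · exact lt_of_lt_of_le h (le_max_left _ _)
    · constructor
      · exact lt_of_le_of_lt (min_le_left _ _) h
      · exact lt_of_lt_of_le (by rw [hrefl]; linarith) (le_max_right _ _)
  obtain ⟨H, hH, hTH, hTmax⟩ := path_hits hconv hmax hmc hcomp hF hF' v i hagree hx
  have : f v = max (T F) (T F') := by rw [← hTH, ← hf H hH, hTmax]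
  rw [this, hf F hF]
  exact le_max_left _ _

lemma f_eq_of_one_coord {O : Type*} [MeasurableSpace O] {𝓕 : Set (Measure O)}
    (hconv : ∀ F ∈ 𝓕, ∀ G ∈ 𝓕, ∀ l ∈ Set.Icc (0:ℝ) 1, mix F G l ∈ 𝓕)
    {T : Measure O → ℝ} {k : ℕ} {T' : Measure O → Fin k → ℝ}
    (hmax : MaxFunctional 𝓕 T)
    (hmc : ∀ F ∈ 𝓕, ∀ G ∈ 𝓕, ContinuousOn (fun l : ℝ => T' (mix F G l)) (Set.Icc 0 1))
    (hcomp : ∀ i : Fin k, ∃ S : ℝ → O → ℝ, StrictlyConsistent 𝓕 (fun F => T' F i) S)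
    {f : (Fin k → ℝ) → ℝ} (hf : ∀ F ∈ 𝓕, T F = f (T' F))
    (u v : Fin k → ℝ) (i : Fin k)
    (hu : u ∈ T' '' 𝓕) (hv : v ∈ T' '' 𝓕)
    (hru : (fun j => if j = i then 2 * u i - v i else u j) ∈ T' '' 𝓕)
    (hrv : (fun j => if j = i then 2 * v i - u i else v j) ∈ T' '' 𝓕)
    (hagree : ∀ j, j ≠ i → u j = v j) (hne : u i ≠ v i) :
    f u = f v := by
  obtain ⟨Fu, hFu, hTu⟩ := hu
  obtain ⟨Fv, hFv, hTv⟩ := hv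
  obtain ⟨Fru, hFru, hTru⟩ := hru
  obtain ⟨Frv, hFrv, hTrv⟩ := hrv
  have h1 : f (T' Fu) ≤ f v := by
    refine f_ge hconv hmax hmc hcomp hf hFu hFrv v i ?_ ?_ ?_
    · intro j hj
      rw [hTu, hTrv]
      simp only [if_neg hj]
      exact ⟨(hagree j hj).symm, (hagree j hj).symm⟩
    · rw [hTu, hTrv]; simp
    · rw [hTu]; exact fun h => hne h.symm
  have h2 : f (T' Fv) ≤ f u := by
    refine f_ge hconv hmax hmc hcomp hf hFv hFru u i ?_ ?_ ?_
    · intro j hj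
      rw [hTv, hTru]
      simp only [if_neg hj]
      exact ⟨hagree j hj, hagree j hj⟩
    · rw [hTv, hTru]; simp
    · rw [hTv]; exact hne
  rw [hTu] at h1; rw [hTv] at h2
  exact le_antisymm h1 h2

lemma local_const {O : Type*} [MeasurableSpace O] {𝓕 : Set (Measure O)}
    (hconv : ∀ F ∈ 𝓕, ∀ G ∈ 𝓕, ∀ l ∈ Set.Icc (0:ℝ) 1, mix F G l ∈ 𝓕)
    {T : Measure O → ℝ} {k : ℕ} {T' : Measure O → Fin k → ℝ}
    (hmax : MaxFunctional 𝓕 T)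
    (hmc : ∀ F ∈ 𝓕, ∀ G ∈ 𝓕, ContinuousOn (fun l : ℝ => T' (mix F G l)) (Set.Icc 0 1))
    (hcomp : ∀ i : Fin k, ∃ S : ℝ → O → ℝ, StrictlyConsistent 𝓕 (fun F => T' F i) S)
    {f : (Fin k → ℝ) → ℝ} (hf : ∀ F ∈ 𝓕, T F = f (T' F))
    (p x : Fin k → ℝ) {ε : ℝ} (hε : 0 < ε)
    (hball : Metric.ball p ε ⊆ T' '' 𝓕)
    (hx : ∀ i, |x i - p i| < ε / 3) : f x = f p := by
  have mem : ∀ y : Fin k → ℝ, (∀ i, |y i - p i| < ε) → y ∈ T' '' 𝓕 := by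
    intro y h
    exact hball ((dist_pi_lt_iff hε).mpr fun i => by rw [Real.dist_eq]; exact h i)
  set z : ℕ → (Fin k → ℝ) := fun m i => if (i : ℕ) < m then x i else p i with hz
  have key : ∀ m : ℕ, m ≤ k → f (z m) = f p := by
    intro m
    induction m with
    | zero =>
      intro _
      have : z 0 = p := funext fun i => by simp [hz]
      rw [this]
    | succ n ih =>
      intro hnk
      have hn : n < k := hnk
      set i₀ : Fin k := ⟨n, hn⟩ with hi₀
      have hvi : ∀ (j : Fin k), j ≠ i₀ → z (n+1) j = z n j := by
        intro j hj
        have hjn : (j : ℕ) ≠ n := fun h => hj (Fin.ext h)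
        by_cases h1 : (j : ℕ) < n
        · simp [hz, h1, Nat.lt_succ_of_lt h1]
        · have h2 : ¬ (j : ℕ) < n + 1 := by omega
          simp [hz, h1, h2]
      have hzn1 : z (n+1) i₀ = x i₀ := by simp [hz, hi₀]
      have hzn0 : z n i₀ = p i₀ := by simp [hz, hi₀]
      by_cases hxp : x i₀ = p i₀
      · have : z (n+1) = z n := by
          funext j
          by_cases hj : j = i₀
          · rw [hj, hzn1, hzn0, hxp]
          · exact hvi j hj
        rw [this]; exact ih (le_of_lt hn)
      · have hcoord : ∀ m : ℕ, ∀ j : Fin k, |z m j - p j| < ε / 3 ∨ z m j = p j := by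
          intro m j
          by_cases h1 : (j : ℕ) < m
          · left; simpa [hz, h1] using hx j
          · right; simp [hz, h1]
        have hclose : ∀ m : ℕ, ∀ j : Fin k, |z m j - p j| < ε := by
          intro m j
          rcases hcoord m j with h|h
          · linarith
          · rw [h]; simpa using hε
        have hmem1 : z (n+1) ∈ T' '' 𝓕 := mem _ (hclose (n+1))
        have hmem0 : z n ∈ T' '' 𝓕 := mem _ (hclose n)
        have hru : (fun j => if j = i₀ then 2 * z (n+1) i₀ - z n i₀ else z (n+1) j) ∈ T' '' 𝓕 := by
          refine mem _ fun j => ?_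
          by_cases hj : j = i₀
          · rw [if_pos hj, hzn1, hzn0, hj]
            have := hx i₀
            rw [abs_lt] at this ⊢
            constructor <;> linarith [this.1, this.2]
          · rw [if_neg hj]; exact hclose (n+1) j
        have hrv : (fun j => if j = i₀ then 2 * z n i₀ - z (n+1) i₀ else z n j) ∈ T' '' 𝓕 := by
          refine mem _ fun j => ?_
          by_cases hj : j = i₀
          · rw [if_pos hj, hzn1, hzn0, hj]
            have := hx i₀
            rw [abs_lt] at this ⊢
            constructor <;> linarith [this.1, this.2]
          · rw [if_neg hj]; exact hclose n j
        have := f_eq_of_one_coord hconv hmax hmc hcomp hf (z (n+1)) (z n) i₀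
          hmem1 hmem0 hru hrv hvi (by rw [hzn1, hzn0]; exact hxp)
        rw [this]; exact ih (le_of_lt hn)
  have hzk : z k = x := funext fun i => by simp [hz, i.isLt]
  rw [← hzk]; exact key k le_rfl


/-- A non-constant max-functional cannot be represented through any mixture-continuous
elicitable intermediate functional with elicitable components and open image. -/
theorem max_functional_infinite_complexity_open_image
    {O : Type*} [MeasurableSpace O]
    (𝓕 : Set (Measure O)) (hprob : ∀ F ∈ 𝓕, IsProbabilityMeasure F)
    (hconv : ∀ F ∈ 𝓕, ∀ G ∈ 𝓕, ∀ l ∈ Set.Icc (0:ℝ) 1, mix F G l ∈ 𝓕)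
    (T : Measure O → ℝ) (hmax : MaxFunctional 𝓕 T)
    (hnonconst : ∃ F ∈ 𝓕, ∃ G ∈ 𝓕, T F ≠ T G)
    (k : ℕ) (T' : Measure O → (Fin k → ℝ))
    (hmc : ∀ F ∈ 𝓕, ∀ G ∈ 𝓕,
      ContinuousOn (fun l : ℝ => T' (mix F G l)) (Set.Icc 0 1))
    (helic : ∃ S : (Fin k → ℝ) → O → ℝ, StrictlyConsistent 𝓕 T' S)
    (hcomp : ∀ i : Fin k, ∃ S : ℝ → O → ℝ, StrictlyConsistent 𝓕 (fun F => T' F i) S)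
    (hopen : IsOpen (T' '' 𝓕)) (hne : (T' '' 𝓕).Nonempty) :
    ¬ ∃ f : (Fin k → ℝ) → ℝ, ∀ F ∈ 𝓕, T F = f (T' F) := by
  rintro ⟨f, hf⟩
  obtain ⟨F₀, hF₀, F₁, hF₁, hTne⟩ := hnonconst
  have key : ∀ G₀ ∈ 𝓕, ∀ G₁ ∈ 𝓕, T G₀ ≤ T G₁ := by
    intro G₀ hG₀ G₁ hG₁
    set p := T' G₁ with hp
    have hpmem : p ∈ T' '' 𝓕 := ⟨G₁, hG₁, rfl⟩
    obtain ⟨ε, hε, hball⟩ := Metric.isOpen_iff.mp hopen p hpmem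
    have hcont : ContinuousWithinAt (fun l : ℝ => T' (mix G₁ G₀ l)) (Set.Icc 0 1) 1 :=
      (hmc G₁ hG₁ G₀ hG₀) 1 ⟨zero_le_one, le_refl 1⟩
    obtain ⟨δ, hδ, hδ'⟩ := Metric.continuousWithinAt_iff.mp hcont (ε/3) (by linarith)
    set l₀ : ℝ := max (1/2) (1 - δ/2) with hl₀def
    have hl₀ : l₀ ∈ Set.Ioo (0:ℝ) 1 := by
      constructor
      · exact lt_of_lt_of_le (by norm_num) (le_max_left _ _)
      · apply max_lt (by norm_num) (by linarith)
    have hd : dist l₀ 1 < δ := by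
      rw [Real.dist_eq, abs_of_nonpos (by linarith [hl₀.2])]
      have : 1 - δ/2 ≤ l₀ := le_max_right _ _
      linarith
    have hin : dist (T' (mix G₁ G₀ l₀)) (T' (mix G₁ G₀ 1)) < ε/3 :=
      hδ' ⟨hl₀.1.le, hl₀.2.le⟩ hd
    rw [mix_one] at hin
    have hM : mix G₁ G₀ l₀ ∈ 𝓕 := hconv G₁ hG₁ G₀ hG₀ l₀ ⟨hl₀.1.le, hl₀.2.le⟩
    have hfx : f (T' (mix G₁ G₀ l₀)) = f p := by
      refine local_const hconv hmax hmc hcomp hf p (T' (mix G₁ G₀ l₀)) hε hball fun i => ?_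
      rw [← Real.dist_eq]
      exact lt_of_le_of_lt (dist_le_pi_dist _ _ i) hin
    have hTM : T (mix G₁ G₀ l₀) = max (T G₀) (T G₁) := hmax G₀ hG₀ G₁ hG₁ l₀ hl₀
    have : max (T G₀) (T G₁) = T G₁ := by
      rw [← hTM, hf _ hM, hfx, hp, ← hf G₁ hG₁]
    exact le_of_max_le_left this.le
  exact hTne (le_antisymm (key F₀ hF₀ F₁ hF₁) (key F₁ hF₁ F₀ hF₀))
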